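/- Non-negative expected payoff of a rational player (Theorem 2, quantitative form): for every real r with 1/2 ≤ r ≤ 1, under the infinite product measure μ_r = ⨂_{n∈ℕ} Bernoulli(r) on ℕ → Bool, let W be the event that player A wins the game, namely {ω : ℕ → Bool | ∃ n, ω n = ω (n+1), and at the least such index n one has ω n = true}. Then the expected payoff ∫ (6·1_W(ω) − 3) dμ_r(ω) = 6·μ_r(W) − 3 is non-negative; in particular, for r = 1/2 it equals 0. -/

import Mathlib

open MeasureTheory

/-- `μ` is the infinite product measure `⨂_{n ∈ ℕ} Bernoulli(r)` on `ℕ → Bool`: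
it is characterized by its values on cylinder sets, where each fixed coordinate
contributes a factor `r` (if fixed to `true`) or `1 - r` (if fixed to `false`). -/
def IsBernoulliProduct (r : ℝ) (μ : Measure (ℕ → Bool)) : Prop :=
  ∀ (s : Finset ℕ) (f : ℕ → Bool),
    μ {ω | ∀ i ∈ s, ω i = f i} =
      ∏ i ∈ s, (if f i then ENNReal.ofReal r else ENNReal.ofReal (1 - r))

/-- Player A wins the game on outcome `ω`: there is some index `n` with
`ω n = ω (n+1)`, and at the least such index `n` one has `ω n = true`. -/
def AWins (ω : ℕ → Bool) : Prop :=
  ∃ h : ∃ n : ℕ, ω n = ω (n + 1), ω (Nat.find h) = true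

open Finset Function

/-
A wins exactly when the flips alternate up to some index `n` and then come up true at `n`
and `n + 1`. This fixes the first `n + 2` flips, a cylinder of measure
`r² (r(1-r))^⌊n/2⌋ (1-r)^(n mod 2)`; these cylinders are disjoint, and summing the two geometric
series gives
`μ_r(W) = r²(2-r) / (1 - r(1-r))`. Finally `2 r²(2-r) - (1 - r(1-r)) = (2r-1)(1+r-r²)`, which is
non-negative for `1/2 ≤ r ≤ 1` and vanishes at `r = 1/2`.
-/

theorem aWins_iff {ω : ℕ → Bool} :
    AWins ω ↔ ∃ n, (∀ m < n, ω m ≠ ω (m + 1)) ∧ ω n = true ∧ ω (n + 1) = true := by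
  constructor
  · rintro ⟨h, hwin⟩
    exact ⟨Nat.find h, fun m hm => Nat.find_min h hm, hwin, (Nat.find_spec h).symm.trans hwin⟩
  · rintro ⟨n, halt, hn, hn1⟩
    have h : ∃ n, ω n = ω (n + 1) := ⟨n, hn.trans hn1.symm⟩
    have hfind : Nat.find h = n := (Nat.find_eq_iff h).2 ⟨hn.trans hn1.symm, halt⟩
    exact ⟨h, hfind ▸ hn⟩

theorem eq_decide_mod_two_of_alternating {ω : ℕ → Bool} {n : ℕ}
    (halt : ∀ m < n, ω m ≠ ω (m + 1)) (hn : ω n = true) {i : ℕ} (hi : i ≤ n) :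
    ω i = decide (i % 2 = n % 2) := by
  induction hi using Nat.decreasingInduction with
  | self => simp [hn]
  | of_succ i hi ih =>
    have := halt i hi
    cases h : ω i <;>
      simp_all only [ne_eq, false_eq_decide_iff, true_eq_decide_iff, Decidable.not_not,
        decide_true, decide_false] <;> omega

def winPattern (n i : ℕ) : Bool := decide (i % 2 = n % 2 ∨ i = n + 1)

def winCylinder (n : ℕ) : Set (ℕ → Bool) := {ω | ∀ i ∈ range (n + 2), ω i = winPattern n i}

theorem mem_winCylinder_iff {ω : ℕ → Bool} {n : ℕ} :
    ω ∈ winCylinder n ↔ (∀ m < n, ω m ≠ ω (m + 1)) ∧ ω n = true ∧ ω (n + 1) = true := by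
  simp only [winCylinder, Set.mem_ofPred, mem_range]
  constructor
  · intro hω
    refine ⟨fun m hm => ?_, ?_, ?_⟩
    · rw [hω m (by omega), hω (m + 1) (by omega), winPattern, winPattern]
      simp only [ne_eq, decide_eq_decide]
      omega
    · simp [hω n (by omega), winPattern]
    · simp [hω (n + 1) (by omega), winPattern]
  · rintro ⟨halt, hn, hn1⟩ i hi
    rcases Nat.lt_succ_iff_lt_or_eq.1 hi with hi | rfl
    · rw [eq_decide_mod_two_of_alternating halt hn (by omega), winPattern]
      simp only [decide_eq_decide]
      omega
    · simp [hn1, winPattern]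

theorem setOf_aWins_eq_iUnion_winCylinder : {ω | AWins ω} = ⋃ n, winCylinder n := by
  ext ω
  simp [aWins_iff, mem_winCylinder_iff]

theorem pairwise_disjoint_winCylinder : Pairwise (Disjoint on winCylinder) := by
  refine (pairwise_disjoint_on winCylinder).2 fun m n hmn => Set.disjoint_left.2 fun ω hm hn => ?_
  rw [mem_winCylinder_iff] at hm hn
  exact hn.1 m hmn (hm.2.1.trans hm.2.2.symm)

theorem measurableSet_winCylinder (n : ℕ) : MeasurableSet (winCylinder n) :=
  MeasurableSet.pi (range (n + 2)).countable_toSet fun _ _ => measurableSet_singleton _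

theorem prod_range_ite_mod_two {M : Type*} [CommMonoid M] (p q : M) (n : ℕ) :
    ∏ i ∈ range n, (if i % 2 = n % 2 then p else q) = (p * q) ^ (n / 2) * q ^ (n % 2) := by
  induction n using Nat.twoStepInduction with
  | zero => simp
  | one => simp
  | more n ih _ =>
    rw [prod_range_succ, prod_range_succ, Nat.add_mod_right, ih, if_pos rfl,
      if_neg (by omega), Nat.add_div_right _ two_pos, pow_succ]
    ac_rfl

theorem prod_range_winPattern {M : Type*} [CommMonoid M] (p q : M) (n : ℕ) :
    ∏ i ∈ range (n + 2), (if winPattern n i then p else q) =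
      p ^ 2 * (p * q) ^ (n / 2) * q ^ (n % 2) := by
  have hinit : ∏ i ∈ range n, (if winPattern n i then p else q) =
      ∏ i ∈ range n, (if i % 2 = n % 2 then p else q) := prod_congr rfl fun i hi => by
    have : i ≠ n + 1 := by rw [mem_range] at hi; omega
    simp [winPattern, this]
  rw [prod_range_succ, prod_range_succ, hinit, prod_range_ite_mod_two]
  simp only [winPattern, true_or, decide_true, if_true, or_true]
  rw [sq]
  ac_rfl

theorem hasSum_pow_div_two_mul_pow_mod_two {x : ℝ} (hx0 : 0 ≤ x) (hx1 : x < 1) (q : ℝ) :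
    HasSum (fun n : ℕ => x ^ (n / 2) * q ^ (n % 2)) ((1 + q) / (1 - x)) := by
  have hgeom := hasSum_geometric_of_lt_one hx0 hx1
  have heven : HasSum (fun k : ℕ => x ^ (2 * k / 2) * q ^ (2 * k % 2)) (1 - x)⁻¹ := by
    refine hgeom.congr_fun fun k => ?_
    rw [Nat.mul_div_cancel_left k two_pos, Nat.mul_mod_right, pow_zero, mul_one]
  have hodd :
      HasSum (fun k : ℕ => x ^ ((2 * k + 1) / 2) * q ^ ((2 * k + 1) % 2)) ((1 - x)⁻¹ * q) := by
    refine (hgeom.mul_right q).congr_fun fun k => ?_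
    rw [Nat.mul_add_div two_pos, Nat.mul_add_mod, Nat.div_eq_of_lt one_lt_two, add_zero, pow_one]
  convert HasSum.even_add_odd (f := fun n : ℕ => x ^ (n / 2) * q ^ (n % 2)) heven hodd using 1
  ring

theorem MeasureTheory.hasSum_measureReal_iUnion {α ι : Type*} [MeasurableSpace α] [Countable ι]
    {μ : Measure α} [IsFiniteMeasure μ] {s : ι → Set α} (hd : Pairwise (Disjoint on s))
    (hs : ∀ i, MeasurableSet (s i)) : HasSum (fun i => μ.real (s i)) (μ.real (⋃ i, s i)) := by
  have hsum := ENNReal.hasSum_toReal (f := fun i => μ (s i))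
    (by rw [← measure_iUnion hd hs]; exact measure_ne_top _ _)
  rwa [← ENNReal.tsum_toReal_eq fun i => measure_ne_top _ _, ← measure_iUnion hd hs] at hsum

namespace IsBernoulliProduct

variable {r : ℝ} {μ : Measure (ℕ → Bool)}

theorem isProbabilityMeasure (hμ : IsBernoulliProduct r μ) : IsProbabilityMeasure μ :=
  ⟨by simpa using hμ ∅ fun _ => true⟩

theorem measureReal_cylinder (hμ : IsBernoulliProduct r μ) (hr0 : 0 ≤ r) (hr1 : r ≤ 1)
    (s : Finset ℕ) (f : ℕ → Bool) :
    μ.real {ω | ∀ i ∈ s, ω i = f i} = ∏ i ∈ s, (if f i then r else 1 - r) := by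
  rw [measureReal_def, hμ, ENNReal.toReal_prod]
  refine prod_congr rfl fun i _ => ?_
  split_ifs
  · exact ENNReal.toReal_ofReal hr0
  · exact ENNReal.toReal_ofReal (sub_nonneg.2 hr1)

end IsBernoulliProduct

noncomputable def winProb (r : ℝ) : ℝ := r ^ 2 * (2 - r) / (1 - r * (1 - r))

theorem measureReal_setOf_aWins {r : ℝ} {μ : Measure (ℕ → Bool)} (hμ : IsBernoulliProduct r μ)
    (hr0 : 0 ≤ r) (hr1 : r ≤ 1) : μ.real {ω | AWins ω} = winProb r := by
  have := hμ.isProbabilityMeasure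
  have hcylinder (n : ℕ) :
      μ.real (winCylinder n) = r ^ 2 * ((r * (1 - r)) ^ (n / 2) * (1 - r) ^ (n % 2)) := by
    rw [winCylinder, hμ.measureReal_cylinder hr0 hr1, prod_range_winPattern, mul_assoc]
  have hsum := hasSum_measureReal_iUnion (μ := μ) pairwise_disjoint_winCylinder
    measurableSet_winCylinder
  simp only [hcylinder, ← setOf_aWins_eq_iUnion_winCylinder] at hsum
  have hseries := (hasSum_pow_div_two_mul_pow_mod_two (mul_nonneg hr0 (sub_nonneg.2 hr1))
    (by nlinarith [sq_nonneg (r - 1 / 2)]) (1 - r)).mul_left (r ^ 2)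
  rw [show r ^ 2 * ((1 + (1 - r)) / (1 - r * (1 - r))) = winProb r by rw [winProb]; ring] at hseries
  exact hsum.unique hseries

theorem half_le_winProb {r : ℝ} (hr0 : 1 / 2 ≤ r) (hr1 : r ≤ 1) : 1 / 2 ≤ winProb r := by
  rw [winProb, le_div_iff₀ (by nlinarith)]
  have hfactor : 0 ≤ (2 * r - 1) * (1 + r - r ^ 2) := mul_nonneg (by linarith) (by nlinarith)
  nlinarith

theorem winProb_half : winProb (1 / 2) = 1 / 2 := by
  norm_num [winProb]

theorem MeasureTheory.integral_mul_indicator_one_sub {α : Type*} [MeasurableSpace α]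
    {μ : Measure α} [IsProbabilityMeasure μ] {s : Set α} (hs : MeasurableSet s) (a b : ℝ) :
    ∫ x, (a * s.indicator (fun _ => (1 : ℝ)) x - b) ∂μ = a * μ.real s - b := by
  rw [integral_sub (((integrable_const 1).indicator hs).const_mul a) (integrable_const b),
    integral_const_mul, integral_indicator_const _ hs, integral_const]
  simp

/-- Non-negative expected payoff of a rational player: if A wins each flip with
probability `r ≥ 1/2`, then A's expected payoff
`∫ (6·1_W(ω) − 3) dμ_r(ω) = 6·μ_r(W) − 3` is non-negative, where `W` is the
event that A wins the game; for `r = 1/2` it equals `0`. -/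
theorem rational_player_nonneg_payoff
    (r : ℝ) (hr0 : 1 / 2 ≤ r) (hr1 : r ≤ 1)
    (μ : Measure (ℕ → Bool)) (hμ : IsBernoulliProduct r μ) :
    (∫ ω, (6 * Set.indicator {ω : ℕ → Bool | AWins ω} (fun _ => (1 : ℝ)) ω - 3) ∂μ
        = 6 * (μ {ω : ℕ → Bool | AWins ω}).toReal - 3) ∧
    (0 ≤ 6 * (μ {ω : ℕ → Bool | AWins ω}).toReal - 3) ∧
    (r = 1 / 2 →
      ∫ ω, (6 * Set.indicator {ω : ℕ → Bool | AWins ω} (fun _ => (1 : ℝ)) ω - 3) ∂μ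
        = 0) := by
  have := hμ.isProbabilityMeasure
  have hW : MeasurableSet {ω | AWins ω} := by
    rw [setOf_aWins_eq_iUnion_winCylinder]
    exact .iUnion measurableSet_winCylinder
  have hpayoff := integral_mul_indicator_one_sub (μ := μ) hW 6 3
  have hprob : μ.real {ω | AWins ω} = winProb r := measureReal_setOf_aWins hμ (by linarith) hr1
  rw [measureReal_def] at hpayoff hprob
  refine ⟨hpayoff, ?_, fun hr => ?_⟩
  · linarith [half_le_winProb hr0 hr1]
  · rw [hpayoff, hprob, hr, winProb_half]
    norm_num
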